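/- arXiv:2402.14267 — 2 statements merged into one kernel-verified Lean document; each statement's English description precedes it below -/
import Mathlib

section
/- Let η : ℝ → E be a differentiable curve satisfying Newton's law η̇(t) = −λ(η(t) − η_q), where ψ is twice continuously differentiable. Then for every t, the function t ↦ F(η(t)) is differentiable and d/dt F(η(t)) = −λ ⟪η(t) − η_q, H(η(t)) (η(t) − η_q)⟫. In particular, if ψ is convex (so that H is positive semidefinite everywhere), then t ↦ F(η(t)) is nonincreasing. -/
/-!
Differentiating the Bregman divergence along any curve, the two gradient terms cancel and only
`⟪H(η) η̇, η - ηq⟫` survives; Newton's law `η̇ = -λ (η - ηq)` turns this into `-λ` times the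
Hessian quadratic form at `η - ηq`. For convex `ψ` that form is nonnegative, since the derivative
of `ψ` restricted to a line is monotone.
-/

open scoped RealInnerProductSpace Gradient

section Bregman

variable {E : Type*} [NormedAddCommGroup E] [InnerProductSpace ℝ E] [CompleteSpace E]

noncomputable def bregmanDiv (ψ : E → ℝ) (q x : E) : ℝ :=
  ψ q - ψ x - ⟪∇ ψ x, q - x⟫

theorem ContDiff.differentiable_gradient {ψ : E → ℝ} (hψ : ContDiff ℝ 2 ψ) :
    Differentiable ℝ (∇ ψ) :=
  ((InnerProductSpace.toDual ℝ E).symm.contDiff.comp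
    (hψ.fderiv_right (m := 1) (by norm_num))).differentiable one_ne_zero

theorem DifferentiableAt.hasDerivAt_comp_inner_gradient {ψ : E → ℝ} {γ : ℝ → E} {γ' : E}
    {t : ℝ} (hψ : DifferentiableAt ℝ ψ (γ t)) (hγ : HasDerivAt γ γ' t) :
    HasDerivAt (fun s => ψ (γ s)) ⟪∇ ψ (γ t), γ'⟫ t := by
  rw [inner_gradient_left]
  exact hψ.hasFDerivAt.comp_hasDerivAt t hγ

theorem HasDerivAt.bregmanDiv {ψ : E → ℝ} {q : E} {γ : ℝ → E} {γ' : E} {t : ℝ}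
    (hψ : DifferentiableAt ℝ ψ (γ t)) (hgrad : DifferentiableAt ℝ (∇ ψ) (γ t))
    (hγ : HasDerivAt γ γ' t) :
    HasDerivAt (fun s => _root_.bregmanDiv ψ q (γ s)) ⟪fderiv ℝ (∇ ψ) (γ t) γ', γ t - q⟫ t := by
  have h : HasDerivAt (fun s => _root_.bregmanDiv ψ q (γ s))
      (0 - ⟪∇ ψ (γ t), γ'⟫ - (⟪∇ ψ (γ t), 0 - γ'⟫ + ⟪fderiv ℝ (∇ ψ) (γ t) γ', q - γ t⟫)) t :=
    ((hasDerivAt_const t (ψ q)).sub (hψ.hasDerivAt_comp_inner_gradient hγ)).sub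
      ((hgrad.hasFDerivAt.comp_hasDerivAt t hγ).inner ℝ ((hasDerivAt_const t q).sub hγ))
  refine h.congr_deriv ?_
  rw [← neg_sub (γ t) q]
  simp only [zero_sub, inner_neg_right]
  ring

theorem ConvexOn.inner_fderiv_gradient_self_nonneg {ψ : E → ℝ} (hconv : ConvexOn ℝ Set.univ ψ)
    (hψ : Differentiable ℝ ψ) {x : E} (hgrad : DifferentiableAt ℝ (∇ ψ) x) (v : E) :
    0 ≤ ⟪fderiv ℝ (∇ ψ) x v, v⟫ := by
  have hline : ∀ s : ℝ, HasDerivAt (fun s : ℝ => x + s • v) v s := fun s => by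
    simpa using ((hasDerivAt_id s).smul_const v).const_add x
  have hrestrict : ∀ s, HasDerivAt (fun s : ℝ => ψ (x + s • v)) ⟪∇ ψ (x + s • v), v⟫ s :=
    fun s => (hψ _).hasDerivAt_comp_inner_gradient (hline s)
  have hconv_line : ConvexOn ℝ Set.univ (fun s : ℝ => ψ (x + s • v)) := by
    have hline_eq : (fun s : ℝ => ψ (x + s • v)) = ψ ∘ AffineMap.lineMap x (x + v) := by
      funext s
      simp [AffineMap.lineMap_apply, add_comm]
    simpa [hline_eq] using hconv.comp_affineMap (AffineMap.lineMap x (x + v))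
  have hmono : Monotone (fun s : ℝ => ⟪∇ ψ (x + s • v), v⟫) := by
    intro a b hab
    have := hconv_line.monotoneOn_deriv (fun s _ => (hrestrict s).differentiableAt)
      (Set.mem_univ a) (Set.mem_univ b) hab
    rwa [(hrestrict a).deriv, (hrestrict b).deriv] at this
  have hslope : HasDerivAt (fun s : ℝ => ⟪∇ ψ (x + s • v), v⟫) ⟪fderiv ℝ (∇ ψ) x v, v⟫ 0 := by
    have h := (hgrad.hasFDerivAt.comp_hasDerivAt_of_eq (0 : ℝ) (hline 0) (by simp)).inner ℝ
      (hasDerivAt_const (0 : ℝ) v)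
    simpa using h
  exact hslope.deriv ▸ hmono.deriv_nonneg

end Bregman

/-- Along a Newtonian relaxation `η̇ = −λ(η − ηq)`, the Bregman divergence `F` to the
target satisfies `d/dt F(η(t)) = −λ ⟪η − ηq, H(η)(η − ηq)⟫`; in particular, if `ψ` is
convex then `t ↦ F(η(t))` is nonincreasing. -/
theorem bregman_divergence_decreases_along_newton_flow
    (n : ℕ) (ψ : EuclideanSpace ℝ (Fin n) → ℝ) (hψ : ContDiff ℝ 2 ψ)
    (ηq : EuclideanSpace ℝ (Fin n)) (lam : ℝ) (hlam : 0 < lam)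
    (H : EuclideanSpace ℝ (Fin n) →
      EuclideanSpace ℝ (Fin n) →L[ℝ] EuclideanSpace ℝ (Fin n))
    (hH : ∀ η, H η = fderiv ℝ (gradient ψ) η)
    (F : EuclideanSpace ℝ (Fin n) → ℝ)
    (hF : ∀ η, F η = ψ ηq - ψ η - ⟪gradient ψ η, ηq - η⟫)
    (η : ℝ → EuclideanSpace ℝ (Fin n)) (hη : Differentiable ℝ η)
    (hnewton : ∀ t, deriv η t = (-lam) • (η t - ηq)) :
    (∀ t, HasDerivAt (fun s => F (η s))
      (-lam * ⟪η t - ηq, H (η t) (η t - ηq)⟫) t) ∧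
    (ConvexOn ℝ Set.univ ψ → Antitone (fun t => F (η t))) := by
  have hψd : Differentiable ℝ ψ := hψ.differentiable (by norm_num)
  have hderiv : ∀ t, HasDerivAt (fun s => F (η s))
      (-lam * ⟪η t - ηq, H (η t) (η t - ηq)⟫) t := by
    intro t
    have hηt : HasDerivAt η ((-lam) • (η t - ηq)) t := hnewton t ▸ (hη t).hasDerivAt
    convert hηt.bregmanDiv (hψd _) (hψ.differentiable_gradient _) using 1
    · exact funext fun s => hF (η s)
    · rw [hH, map_smul, real_inner_smul_left, real_inner_comm]
  refine ⟨hderiv, fun hconv => antitone_of_deriv_nonpos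
    (fun t => (hderiv t).differentiableAt) fun t => ?_⟩
  have hpsd : 0 ≤ ⟪η t - ηq, H (η t) (η t - ηq)⟫ := by
    rw [hH, real_inner_comm]
    exact hconv.inner_fderiv_gradient_self_nonneg hψd (hψ.differentiable_gradient _) _
  rw [(hderiv t).deriv, neg_mul]
  exact neg_nonpos.mpr (mul_nonneg hlam.le hpsd)
end

section
/- Let λ > 0, 0 < T₀⁻ < T_q < T₀⁺ with g(T₀⁺) = g(T₀⁻) where g(T) := T − T_q log T, and let T^±(t) := T_q + (T₀^± − T_q) e^{−λ t}, a := T₀⁺ − T_q, b := T_q − T₀⁻. Then there is exactly one time t* > 0 with T⁺(t*) · T⁻(t*) = T_q², namely t* = (1/λ) · log(a b / (T_q (a − b))); in particular a > b and 0 < T_q(a − b) < a b, so t* is well defined and positive. -/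
/-!
Equidistance `g(T₀⁺) = g(T₀⁻)` says exactly that `T_q` is the logarithmic mean of `T₀⁺` and `T₀⁻`.
The strict inequalities geometric mean < logarithmic mean < arithmetic mean then give
`T₀⁺ T₀⁻ < T_q²` and `2 T_q < T₀⁺ + T₀⁻`, i.e. `0 < T_q (a − b) < a b`. With `E = e^{−λt}`,
`T⁺ T⁻ − T_q² = E (T_q (a − b) − a b E)`, which vanishes for exactly one `E > 0`, and `t ↦ E` is
injective.
-/

open Real

noncomputable def logMean (x y : ℝ) : ℝ := (x - y) / (log x - log y)

theorem logMean_eq_of_sub_mul_log_eq {x y q : ℝ} (hy : 0 < y) (hxy : y < x)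
    (h : x - q * log x = y - q * log y) : logMean x y = q := by
  have hlog : log y < log x := log_lt_log hy hxy
  rw [logMean, div_eq_iff (sub_ne_zero.2 hlog.ne')]
  linarith

theorem sqrt_mul_lt_logMean {x y : ℝ} (hy : 0 < y) (hxy : y < x) : √(x * y) < logMean x y := by
  have hu : 0 < (log x - log y) / 2 := by linarith [log_lt_log hy hxy]
  -- write `x = e^(m+u)`, `y = e^(m-u)`; then `√(xy) = e^m` and `x - y = 2 e^m sinh u`
  set m := (log x + log y) / 2
  set u := (log x - log y) / 2
  have hx : x = exp m * exp u := by
    rw [← exp_add, show m + u = log x by ring, exp_log (hy.trans hxy)]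
  have hy' : y = exp m * exp (-u) := by
    rw [← exp_add, show m + -u = log y by ring, exp_log hy]
  have hsqrt : √(x * y) = exp m := by
    rw [hx, hy', show exp m * exp u * (exp m * exp (-u)) = exp m ^ 2 by
      rw [mul_mul_mul_comm, ← exp_add u, add_neg_cancel, exp_zero, mul_one, sq],
      sqrt_sq (exp_pos m).le]
  have hsinh : u < sinh u := self_lt_sinh_iff.2 hu
  rw [sinh_eq] at hsinh
  rw [logMean, hsqrt, show log x - log y = 2 * u by ring, lt_div_iff₀ (by linarith), hx, hy']
  nlinarith [exp_pos m]

theorem two_mul_div_add_two_lt_log_one_add {a : ℝ} (ha : 0 < a) :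
    2 * a / (a + 2) < log (1 + a) := by
  have hsum :=
    sum_le_hasSum (Finset.range 2) (fun k _ => by positivity) (hasSum_log_one_add ha.le)
  norm_num [Finset.sum_range_succ] at hsum
  have : 0 < (a / (a + 2)) ^ 3 := by positivity
  rw [mul_div_assoc]
  linarith

theorem logMean_lt_add_div_two {x y : ℝ} (hy : 0 < y) (hxy : y < x) :
    logMean x y < (x + y) / 2 := by
  have hlog : log y < log x := log_lt_log hy hxy
  have h := two_mul_div_add_two_lt_log_one_add (a := x / y - 1)
    (by rw [sub_pos, one_lt_div hy]; exact hxy)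
  rw [add_sub_cancel, log_div (hy.trans hxy).ne' hy.ne',
    show 2 * (x / y - 1) / (x / y - 1 + 2) = 2 * (x - y) / (x + y) by field_simp; ring,
    div_lt_iff₀ (by linarith)] at h
  rw [logMean, div_lt_iff₀ (by linarith)]
  linarith

theorem cooling_mul_eq_sq_iff {q a b E : ℝ} (hE : E ≠ 0) (hab : a * b ≠ 0) :
    (q + a * E) * (q - b * E) = q ^ 2 ↔ E = q * (a - b) / (a * b) := by
  have key : (q + a * E) * (q - b * E) - q ^ 2 = E * (q * (a - b) - a * b * E) := by ring
  rw [← sub_eq_zero, key, mul_eq_zero, or_iff_right hE, sub_eq_zero, eq_div_iff hab, mul_comm E,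
    eq_comm]

theorem exp_neg_mul_eq_iff {lam t c : ℝ} (hlam : lam ≠ 0) (hc : 0 < c) :
    exp (-lam * t) = c ↔ t = 1 / lam * log c⁻¹ := by
  nth_rw 1 [← exp_log hc]
  rw [exp_eq_exp, log_inv]
  field_simp
  constructor <;> intro h <;> linarith

/-- For thermodynamically equidistant initial temperatures, there is exactly one time
`t* > 0` with `T⁺(t*) T⁻(t*) = T_q²`, namely `t* = (1/λ) log(ab/(T_q(a−b)))` with
`a = T₀⁺ − T_q` and `b = T_q − T₀⁻`; in particular `a > b` and
`0 < T_q(a−b) < ab`. -/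
theorem unique_critical_time
    (lam Tq T0m T0p : ℝ) (hlam : 0 < lam)
    (hT0m : 0 < T0m) (hTm : T0m < Tq) (hTp : Tq < T0p)
    (heq : T0p - Tq * Real.log T0p = T0m - Tq * Real.log T0m)
    (Tp Tm : ℝ → ℝ)
    (hTpdef : ∀ t, Tp t = Tq + (T0p - Tq) * Real.exp (-lam * t))
    (hTmdef : ∀ t, Tm t = Tq + (T0m - Tq) * Real.exp (-lam * t))
    (a b : ℝ) (ha : a = T0p - Tq) (hb : b = Tq - T0m)
    (tstar : ℝ) (htstar : tstar = (1 / lam) * Real.log (a * b / (Tq * (a - b)))) :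
    b < a ∧ 0 < Tq * (a - b) ∧ Tq * (a - b) < a * b ∧
    0 < tstar ∧ Tp tstar * Tm tstar = Tq ^ 2 ∧
    ∀ t > (0:ℝ), Tp t * Tm t = Tq ^ 2 → t = tstar := by
  have hTq : 0 < Tq := hT0m.trans hTm
  have hmean : logMean T0p T0m = Tq := logMean_eq_of_sub_mul_log_eq hT0m (hTm.trans hTp) heq
  have hgeom : T0p * T0m < Tq ^ 2 := by
    simpa only [hmean, sqrt_lt' hTq] using sqrt_mul_lt_logMean hT0m (hTm.trans hTp)
  have harith : 2 * Tq < T0p + T0m := by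
    linarith [hmean ▸ logMean_lt_add_div_two hT0m (hTm.trans hTp)]
  have hba : b < a := by linarith
  have hab : 0 < a * b := mul_pos (by linarith) (by linarith)
  have hpos : 0 < Tq * (a - b) := mul_pos hTq (by linarith)
  have hlt : Tq * (a - b) < a * b := by
    have : a * b - Tq * (a - b) = Tq ^ 2 - T0p * T0m := by rw [ha, hb]; ring
    linarith
  have hcrit : ∀ t, Tp t * Tm t = Tq ^ 2 ↔ t = tstar := by
    intro t
    rw [hTpdef, hTmdef, ← ha,
      show Tq + (T0m - Tq) * exp (-lam * t) = Tq - b * exp (-lam * t) by rw [hb]; ring,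
      cooling_mul_eq_sq_iff (exp_pos _).ne' hab.ne',
      exp_neg_mul_eq_iff hlam.ne' (div_pos hpos hab), inv_div, htstar]
  refine ⟨hba, hpos, hlt, ?_, (hcrit tstar).2 rfl, fun t _ ht => (hcrit t).1 ht⟩
  rw [htstar]
  exact mul_pos (one_div_pos.2 hlam) (log_pos ((one_lt_div hpos).2 hlt))
end
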